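/- Entire-frequency KYP-type performance condition for LPV systems (Lemma 6, sufficiency). Let n, p, q be positive integers and let A, B, C, D be continuous matrix-valued functions on [0,∞) with values in ℂ^{n×n}, ℂ^{n×p}, ℂ^{q×n}, ℂ^{q×p}. Let x : [0,∞) → ℂⁿ be continuously differentiable with x(0) = 0, let u : [0,∞) → ℂ^p be continuous, assume ẋ(t) = A(t)x(t) + B(t)u(t) for all t ≥ 0, and define y(t) = C(t)x(t) + D(t)u(t). Let Π ∈ ℂ^{(q+p)×(q+p)} be Hermitian and let P : [0,∞) → ℂ^{n×n} be differentiable with P(t) Hermitian for every t. Assume: (i) for every t ≥ 0, [A(t) B(t); I 0]^* (Θ ⊗ P(t) + Θ_d ⊗ P'(t)) [A(t) B(t); I 0] + [C(t) D(t); 0 I]^* Π [C(t) D(t); 0 I] ⪯ 0; (ii) t ↦ [y(t); u(t)]^* Π [y(t); u(t)] is integrable on [0,∞); (iii) lim_{T→∞} x(T)^* P(T) x(T) exists and is nonnegative. Then ∫₀^∞ [y(t); u(t)]^* Π [y(t); u(t)] dt ≤ 0. -/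

import Mathlib

open Matrix MeasureTheory
open scoped ComplexOrder Matrix.Norms.L2Operator

/-- `Ψ ⊗ Q`: the Kronecker product of a `2×2` matrix with an `n×n` matrix,
realized as a `2n × 2n` block matrix. -/
noncomputable def kron2 {n : ℕ} (Ψ : Matrix (Fin 2) (Fin 2) ℂ)
    (Q : Matrix (Fin n) (Fin n) ℂ) : Matrix (Fin n ⊕ Fin n) (Fin n ⊕ Fin n) ℂ :=
  Matrix.fromBlocks (Ψ 0 0 • Q) (Ψ 0 1 • Q) (Ψ 1 0 • Q) (Ψ 1 1 • Q)

/-- The real-valued Hermitian quadratic form `z ↦ z^* H z`. -/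
noncomputable def qf {m : Type*} [Fintype m] (H : Matrix m m ℂ) (z : m → ℂ) : ℝ :=
  (dotProduct (star z) (H.mulVec z)).re

/-!
Along a trajectory the storage function `V t = x(t)^* P(t) x(t)` has derivative
`[ẋ; x]^* (Θ ⊗ P + Θ_d ⊗ P') [ẋ; x]`, and since `[ẋ; x] = [A B; I 0] [x; u]` and
`[y; u] = [C D; 0 I] [x; u]`, evaluating the LMI at `[x; u]` gives the dissipation inequality
`V' + [y; u]^* Π [y; u] ≤ 0`. Integrating over `[0, T]` with `V 0 = 0` bounds the partial integrals
of the supply rate by `-V T`, and letting `T → ∞` bounds the whole integral by `-lim V ≤ 0`.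
-/

open Set Filter Topology

lemma integral_Ioi_le_sub_of_hasDerivAt_of_le {f f' φ : ℝ → ℝ} {a m : ℝ}
    (hcont : ContinuousWithinAt f (Ici a) a) (hderiv : ∀ t ∈ Ioi a, HasDerivAt f (f' t) t)
    (hφint : IntegrableOn φ (Ioi a)) (hφf : ∀ t ∈ Ioi a, φ t ≤ f' t)
    (hf : Tendsto f atTop (𝓝 m)) : ∫ t in Ioi a, φ t ≤ m - f a := by
  have hcontOn : ContinuousOn f (Ici a) := by
    intro t ht
    rcases ht.out.eq_or_lt with rfl | ht
    · exact hcont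
    · exact (hderiv t ht).continuousAt.continuousWithinAt
  have hpartial : ∀ T ≥ a, ∫ t in a..T, φ t ≤ f T - f a := fun T hT =>
    intervalIntegral.integral_le_sub_of_hasDeriv_right_of_le hT (hcontOn.mono Icc_subset_Ici_self)
      (fun t ht => (hderiv t ht.1).hasDerivWithinAt)
      ((integrableOn_Icc_iff_integrableOn_Ioc (f := φ)).2 (hφint.mono_set Ioc_subset_Ioi_self))
      (fun t ht => hφf t ht.1)
  exact le_of_tendsto_of_tendsto (intervalIntegral_tendsto_integral_Ioi a hφint tendsto_id)
    (hf.sub_const _) ((eventually_ge_atTop a).mono hpartial)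

lemma qf_conjTranspose_mul_mul {m k : Type*} [Fintype m] [Fintype k] (K : Matrix k k ℂ)
    (F : Matrix k m ℂ) (z : m → ℂ) : qf (Fᴴ * K * F) z = qf K (F *ᵥ z) := by
  simp only [qf, star_mulVec, ← mulVec_mulVec, dotProduct_mulVec, vecMul_vecMul]

lemma qf_add {m : Type*} [Fintype m] (M N : Matrix m m ℂ) (z : m → ℂ) :
    qf (M + N) z = qf M z + qf N z := by
  simp [qf, add_mulVec, dotProduct_add]

lemma qf_zero_right {m : Type*} [Fintype m] (M : Matrix m m ℂ) : qf M 0 = 0 := by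
  simp [qf]

lemma qf_nonpos_of_posSemidef_neg {m : Type*} [Fintype m] {M : Matrix m m ℂ}
    (h : (-M).PosSemidef) (z : m → ℂ) : qf M z ≤ 0 := by
  have h2 := (Complex.le_def.1 (h.dotProduct_mulVec_nonneg z)).1
  simp only [neg_mulVec, dotProduct_neg, Complex.zero_re, Complex.neg_re] at h2
  exact neg_nonneg.1 h2

lemma qf_fromBlocks_zero {m : Type*} [Fintype m] (P P' : Matrix m m ℂ) (v w : m → ℂ) :
    qf (fromBlocks 0 P P P') (Sum.elim v w)
      = (star v ⬝ᵥ P *ᵥ w + star w ⬝ᵥ P' *ᵥ w + star w ⬝ᵥ P *ᵥ v).re := by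
  rw [qf, fromBlocks_mulVec, Function.star_sumElim, sumElim_dotProduct_sumElim]
  simp only [zero_mulVec, zero_add, dotProduct_add, Sum.elim_comp_inl, Sum.elim_comp_inr]
  ring_nf

lemma kron2_add_kron2 {n : ℕ} (P P' : Matrix (Fin n) (Fin n) ℂ) :
    kron2 !![0,1;1,0] P + kron2 !![0,0;0,1] P' = fromBlocks 0 P P P' := by
  simp [kron2, fromBlocks_add]

-- `DecidableEq m` makes `HasDerivAt P` refer to the scoped L2 operator norm on matrices.
lemma hasDerivAt_qf {m : Type*} [Fintype m] [DecidableEq m] {P P' : ℝ → Matrix m m ℂ}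
    {x x' : ℝ → m → ℂ} {t : ℝ}
    (hP : HasDerivAt P (P' t) t) (hx : HasDerivAt x (x' t) t) :
    HasDerivAt (fun s => qf (P s) (x s))
      (qf (fromBlocks 0 (P t) (P t) (P' t)) (Sum.elim (x' t) (x t))) t := by
  have hxi : ∀ i, HasDerivAt (fun s => x s i) (x' t i) t := fun i => hasDerivAt_pi.1 hx i
  have hPij : ∀ i j, HasDerivAt (fun s => P s i j) (P' t i j) t := fun i j =>
    ((entryLinearMap ℝ ℂ i j).toContinuousLinearMap).hasFDerivAt.comp_hasDerivAt t hP
  have hsum : HasDerivAt (fun s => ∑ i, ∑ j, star (x s i) * (P s i j * x s j))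
      (∑ i, ∑ j, (star (x' t i) * (P t i j * x t j)
        + star (x t i) * (P' t i j * x t j + P t i j * x' t j))) t :=
    HasDerivAt.fun_sum fun i _ => HasDerivAt.fun_sum fun j _ =>
      (hxi i).star.fun_mul ((hPij i j).fun_mul (hxi j))
  have hform : HasDerivAt (fun s => star (x s) ⬝ᵥ P s *ᵥ x s)
      (star (x' t) ⬝ᵥ P t *ᵥ x t + star (x t) ⬝ᵥ P' t *ᵥ x t + star (x t) ⬝ᵥ P t *ᵥ x' t) t := by
    simp only [dotProduct, mulVec, Finset.mul_sum, Pi.star_apply] at hsum ⊢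
    convert hsum using 1
    simp only [mul_add, Finset.sum_add_distrib]
    ring
  rw [qf_fromBlocks_zero]
  exact Complex.reCLM.hasFDerivAt.comp_hasDerivAt t hform

lemma dissipation_of_posSemidef {n : ℕ} {ι κ : Type*} [Fintype ι] [DecidableEq ι] [Fintype κ]
    {A : Matrix (Fin n) (Fin n) ℂ} {B : Matrix (Fin n) ι ℂ} {C : Matrix κ (Fin n) ℂ}
    {D : Matrix κ ι ℂ} {P P' : Matrix (Fin n) (Fin n) ℂ} {Pi : Matrix (κ ⊕ ι) (κ ⊕ ι) ℂ}
    (hLMI : Matrix.PosSemidef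
      (-((fromBlocks A B (1 : Matrix (Fin n) (Fin n) ℂ) 0)ᴴ *
            (kron2 !![0,1;1,0] P + kron2 !![0,0;0,1] P') *
            fromBlocks A B (1 : Matrix (Fin n) (Fin n) ℂ) 0 +
          (fromBlocks C D 0 (1 : Matrix ι ι ℂ))ᴴ * Pi * fromBlocks C D 0 (1 : Matrix ι ι ℂ))))
    (x : Fin n → ℂ) (u : ι → ℂ) :
    qf (fromBlocks 0 P P P') (Sum.elim (A *ᵥ x + B *ᵥ u) x)
      + qf Pi (Sum.elim (C *ᵥ x + D *ᵥ u) u) ≤ 0 := by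
  have h := qf_nonpos_of_posSemidef_neg hLMI (Sum.elim x u)
  rw [qf_add, qf_conjTranspose_mul_mul, qf_conjTranspose_mul_mul, kron2_add_kron2,
    fromBlocks_mulVec, fromBlocks_mulVec] at h
  simpa using h

theorem KYP_LPV_entire_frequency_general
    {n p q : ℕ}
    (A : ℝ → Matrix (Fin n) (Fin n) ℂ) (B : ℝ → Matrix (Fin n) (Fin p) ℂ)
    (C : ℝ → Matrix (Fin q) (Fin n) ℂ) (D : ℝ → Matrix (Fin q) (Fin p) ℂ)
    (x : ℝ → Fin n → ℂ) (x' : ℝ → Fin n → ℂ)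
    (hx : ∀ t ∈ Set.Ici (0:ℝ), HasDerivAt x (x' t) t)
    (hx0 : x 0 = 0)
    (u : ℝ → Fin p → ℂ)
    (hode : ∀ t ∈ Set.Ici (0:ℝ), x' t = (A t).mulVec (x t) + (B t).mulVec (u t))
    (y : ℝ → Fin q → ℂ)
    (hy : ∀ t ∈ Set.Ici (0:ℝ), y t = (C t).mulVec (x t) + (D t).mulVec (u t))
    (Pi : Matrix (Fin q ⊕ Fin p) (Fin q ⊕ Fin p) ℂ)
    (P P' : ℝ → Matrix (Fin n) (Fin n) ℂ)
    (hP : ∀ t ∈ Set.Ici (0:ℝ), HasDerivAt P (P' t) t)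
    -- (i) the pointwise LMI
    (hLMI : ∀ t ∈ Set.Ici (0:ℝ),
      Matrix.PosSemidef
        (-((Matrix.fromBlocks (A t) (B t) (1 : Matrix (Fin n) (Fin n) ℂ) 0)ᴴ *
              (kron2 !![0,1;1,0] (P t) + kron2 !![0,0;0,1] (P' t)) *
              Matrix.fromBlocks (A t) (B t) (1 : Matrix (Fin n) (Fin n) ℂ) 0 +
            (Matrix.fromBlocks (C t) (D t) 0 (1 : Matrix (Fin p) (Fin p) ℂ))ᴴ * Pi *
              Matrix.fromBlocks (C t) (D t) 0 (1 : Matrix (Fin p) (Fin p) ℂ))))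
    -- (ii) integrability of the performance integrand
    (hPerfInt : IntegrableOn (fun t => qf Pi (Sum.elim (y t) (u t))) (Set.Ioi 0))
    -- (iii) the storage function has a nonnegative limit
    (hlim : ∃ L : ℝ, 0 ≤ L ∧
      Filter.Tendsto (fun T => qf (P T) (x T)) Filter.atTop (nhds L)) :
    ∫ t in Set.Ioi (0:ℝ), qf Pi (Sum.elim (y t) (u t)) ≤ 0 := by
  obtain ⟨L, hL, hVlim⟩ := hlim
  have hV : ∀ t ∈ Ici (0:ℝ), HasDerivAt (fun s => qf (P s) (x s))
      (qf (fromBlocks 0 (P t) (P t) (P' t)) (Sum.elim (x' t) (x t))) t :=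
    fun t ht => hasDerivAt_qf (hP t ht) (hx t ht)
  have hdiss : ∀ t ∈ Ici (0:ℝ), qf Pi (Sum.elim (y t) (u t))
      ≤ -qf (fromBlocks 0 (P t) (P t) (P' t)) (Sum.elim (x' t) (x t)) := by
    intro t ht
    have h := dissipation_of_posSemidef (hLMI t ht) (x t) (u t)
    rw [← hode t ht, ← hy t ht] at h
    linarith
  have hbound := integral_Ioi_le_sub_of_hasDerivAt_of_le (f := fun s => -qf (P s) (x s))
    (hV 0 self_mem_Ici).neg.continuousAt.continuousWithinAt
    (fun t ht => (hV t ht.out.le).neg) hPerfInt (fun t ht => hdiss t ht.out.le) hVlim.neg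
  simp only [hx0, qf_zero_right, neg_zero, sub_zero] at hbound
  linarith

/-- Entire-frequency KYP-type performance condition for LPV systems
(Lemma 6, sufficiency). -/
theorem KYP_LPV_entire_frequency
    {n p q : ℕ} (hn : 0 < n) (hp : 0 < p) (hq : 0 < q)
    (A : ℝ → Matrix (Fin n) (Fin n) ℂ) (B : ℝ → Matrix (Fin n) (Fin p) ℂ)
    (C : ℝ → Matrix (Fin q) (Fin n) ℂ) (D : ℝ → Matrix (Fin q) (Fin p) ℂ)
    (hA : ContinuousOn A (Set.Ici 0)) (hB : ContinuousOn B (Set.Ici 0))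
    (hC : ContinuousOn C (Set.Ici 0)) (hD : ContinuousOn D (Set.Ici 0))
    (x : ℝ → Fin n → ℂ) (x' : ℝ → Fin n → ℂ)
    (hx : ∀ t ∈ Set.Ici (0:ℝ), HasDerivAt x (x' t) t)
    (hx'c : ContinuousOn x' (Set.Ici 0))
    (hx0 : x 0 = 0)
    (u : ℝ → Fin p → ℂ) (hu : ContinuousOn u (Set.Ici 0))
    (hode : ∀ t ∈ Set.Ici (0:ℝ), x' t = (A t).mulVec (x t) + (B t).mulVec (u t))
    (y : ℝ → Fin q → ℂ)
    (hy : ∀ t ∈ Set.Ici (0:ℝ), y t = (C t).mulVec (x t) + (D t).mulVec (u t))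
    (Pi : Matrix (Fin q ⊕ Fin p) (Fin q ⊕ Fin p) ℂ) (hPi : Pi.IsHermitian)
    (P P' : ℝ → Matrix (Fin n) (Fin n) ℂ)
    (hP : ∀ t ∈ Set.Ici (0:ℝ), HasDerivAt P (P' t) t)
    (hPH : ∀ t ∈ Set.Ici (0:ℝ), (P t).IsHermitian)
    -- (i) the pointwise LMI
    (hLMI : ∀ t ∈ Set.Ici (0:ℝ),
      Matrix.PosSemidef
        (-((Matrix.fromBlocks (A t) (B t) (1 : Matrix (Fin n) (Fin n) ℂ) 0)ᴴ *
              (kron2 !![0,1;1,0] (P t) + kron2 !![0,0;0,1] (P' t)) *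
              Matrix.fromBlocks (A t) (B t) (1 : Matrix (Fin n) (Fin n) ℂ) 0 +
            (Matrix.fromBlocks (C t) (D t) 0 (1 : Matrix (Fin p) (Fin p) ℂ))ᴴ * Pi *
              Matrix.fromBlocks (C t) (D t) 0 (1 : Matrix (Fin p) (Fin p) ℂ))))
    -- (ii) integrability of the performance integrand
    (hPerfInt : IntegrableOn (fun t => qf Pi (Sum.elim (y t) (u t))) (Set.Ioi 0))
    -- (iii) the storage function has a nonnegative limit
    (hlim : ∃ L : ℝ, 0 ≤ L ∧
      Filter.Tendsto (fun T => qf (P T) (x T)) Filter.atTop (nhds L)) :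
    ∫ t in Set.Ioi (0:ℝ), qf Pi (Sum.elim (y t) (u t)) ≤ 0 :=
  KYP_LPV_entire_frequency_general A B C D x x' hx hx0 u hode y hy Pi P P' hP hLMI hPerfInt hlim
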